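/- Under the stereographic projection n ↦ z = (n₁ - i n₂)/(1 - n₃) from S² \ {(0,0,1)} to ℂ, the map w(r) = ((1-ε²)r + 2ε(1 + ε(n·r))n)/(1 + ε² + 2ε(n·r)) on S² corresponds to the Möbius transformation z ↦ (az + b)/(cz + d) with a = 1 + ε n₃, b = ε(n₁ - i n₂), c = ε(n₁ + i n₂), d = 1 - ε n₃. -/

import Mathlib

/-!
Write `w = W / D` with `D = 1 + ε² + 2ε n·r`, `W = (1 - ε²) r + 2ε(1 + ε n·r) n`, and `z = p / q`
with `p = r₀ - i r₁`, `q = 1 - r₂`. The pair `(p, q)` is a spinor of `r`,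
`(p, q)(p, q)† = q (1 + σ(r))`, and the Pauli algebra gives `M (1 + σ(r)) M = D + σ(W)` for the
Möbius matrix `M = [[a, b], [c, d]] = 1 + ε σ(n)`. Hence `(φ₀, φ₁) = M (p, q)` satisfies
`φ₀ φ̄₁ = q (W₀ - i W₁)` and `φ₁ φ̄₁ = q (D - W₂)`, so that
`stereo w = (W₀ - i W₁) / (D - W₂) = φ₀ / φ₁ = (a z + b) / (c z + d)`.
-/

open Matrix

noncomputable section

/-- Pauli matrix σ₁. -/
def pauli1 : Matrix (Fin 2) (Fin 2) ℂ := !![0, 1; 1, 0]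
/-- Pauli matrix σ₂. -/
def pauli2 : Matrix (Fin 2) (Fin 2) ℂ := !![0, -Complex.I; Complex.I, 0]
/-- Pauli matrix σ₃. -/
def pauli3 : Matrix (Fin 2) (Fin 2) ℂ := !![1, 0; 0, -1]

/-- σ(v) = v₁σ₁ + v₂σ₂ + v₃σ₃ for v ∈ ℝ³. -/
def pauliVec (v : Fin 3 → ℝ) : Matrix (Fin 2) (Fin 2) ℂ :=
  (v 0 : ℂ) • pauli1 + (v 1 : ℂ) • pauli2 + (v 2 : ℂ) • pauli3

/-- Euclidean dot product on ℝ³. -/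
def dot3 (a b : Fin 3 → ℝ) : ℝ := a 0 * b 0 + a 1 * b 1 + a 2 * b 2

/-- v is a unit vector of ℝ³. -/
def IsUnitVec (v : Fin 3 → ℝ) : Prop := dot3 v v = 1

/-- P(n,ε) = (I + ε σ(n))/2. -/
def Pmat (n : Fin 3 → ℝ) (ε : ℝ) : Matrix (Fin 2) (Fin 2) ℂ :=
  ((1 : ℂ)/2) • (1 + (ε : ℂ) • pauliVec n)

/-- λ(ε,n,r) = (1 + ε² + 2ε(n·r))/4. -/
def lam (ε : ℝ) (n r : Fin 3 → ℝ) : ℝ := (1 + ε^2 + 2*ε*(dot3 n r))/4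

/-- The map w(r) = ((1-ε²)r + 2ε(1+ε(n·r))n)/(1+ε²+2ε(n·r)). -/
def wmap (ε : ℝ) (n r : Fin 3 → ℝ) : Fin 3 → ℝ :=
  fun i => ((1 - ε^2) * r i + 2*ε*(1 + ε*(dot3 n r)) * n i) / (1 + ε^2 + 2*ε*(dot3 n r))

/-- Stereographic projection n ↦ (n₁ - i n₂)/(1 - n₃). -/
def stereo (v : Fin 3 → ℝ) : ℂ := ((v 0 : ℂ) - Complex.I * (v 1 : ℂ)) / (1 - (v 2 : ℂ))

open Complex ComplexConjugate

theorem abs_dot3_le_one {n r : Fin 3 → ℝ} (hn : IsUnitVec n) (hr : IsUnitVec r) :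
    |dot3 n r| ≤ 1 := by
  unfold IsUnitVec dot3 at *
  rw [abs_le]
  constructor
  · nlinarith [sq_nonneg (n 0 + r 0), sq_nonneg (n 1 + r 1), sq_nonneg (n 2 + r 2)]
  · nlinarith [sq_nonneg (n 0 - r 0), sq_nonneg (n 1 - r 1), sq_nonneg (n 2 - r 2)]

theorem IsUnitVec.ofReal_sq_add_sq_add_sq {v : Fin 3 → ℝ} (hv : IsUnitVec v) :
    (v 0 : ℂ) ^ 2 + (v 1 : ℂ) ^ 2 + (v 2 : ℂ) ^ 2 = 1 := by
  have := congrArg ((↑) : ℝ → ℂ) hv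
  unfold dot3 at this
  push_cast at this
  linear_combination this

def wmapNum (ε : ℝ) (n r : Fin 3 → ℝ) : Fin 3 → ℝ :=
  fun i => (1 - ε ^ 2) * r i + 2 * ε * (1 + ε * dot3 n r) * n i

def wmapDen (ε : ℝ) (n r : Fin 3 → ℝ) : ℝ := 1 + ε ^ 2 + 2 * ε * dot3 n r

theorem wmap_eq_div (ε : ℝ) (n r : Fin 3 → ℝ) :
    wmap ε n r = fun i => wmapNum ε n r i / wmapDen ε n r := rfl

theorem wmapDen_pos {n r : Fin 3 → ℝ} (hn : IsUnitVec n) (hr : IsUnitVec r) {ε : ℝ}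
    (hε : |ε| < 1) : 0 < wmapDen ε n r := by
  have hεt : -|ε| ≤ ε * dot3 n r := by
    have := mul_le_of_le_one_right (abs_nonneg ε) (abs_dot3_le_one hn hr)
    rw [← abs_mul] at this
    exact (neg_le_neg this).trans (neg_abs_le _)
  unfold wmapDen
  nlinarith [abs_nonneg ε, sq_abs ε]

def stereoNum (v : Fin 3 → ℝ) : ℂ := (v 0 : ℂ) - I * v 1

def stereoDen (v : Fin 3 → ℝ) : ℂ := 1 - (v 2 : ℂ)

theorem stereo_eq_div (v : Fin 3 → ℝ) : stereo v = stereoNum v / stereoDen v := rfl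

theorem stereo_div (W : Fin 3 → ℝ) {D : ℝ} (hD : D ≠ 0) :
    stereo (fun i => W i / D) = stereoNum W / (D - W 2) := by
  have hD' : (D : ℂ) ≠ 0 := ofReal_ne_zero.mpr hD
  simp only [stereo, stereoNum]
  push_cast
  rw [← mul_div_mul_left _ _ hD']
  congr 1 <;> field_simp

def mobiusNum (ε : ℝ) (n : Fin 3 → ℝ) (p q : ℂ) : ℂ :=
  (1 + (ε : ℂ) * n 2) * p + ε * ((n 0 : ℂ) - I * n 1) * q

def mobiusDen (ε : ℝ) (n : Fin 3 → ℝ) (p q : ℂ) : ℂ :=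
  ε * ((n 0 : ℂ) + I * n 1) * p + (1 - (ε : ℂ) * n 2) * q

theorem mobius_div_eq (ε : ℝ) (n : Fin 3 → ℝ) {p q : ℂ} (hq : q ≠ 0) :
    ((1 + (ε : ℂ) * n 2) * (p / q) + ε * ((n 0 : ℂ) - I * n 1)) /
        (ε * ((n 0 : ℂ) + I * n 1) * (p / q) + (1 - (ε : ℂ) * n 2)) =
      mobiusNum ε n p q / mobiusDen ε n p q := by
  rw [← mul_div_mul_right _ _ hq]
  congr 1 <;> field_simp <;> simp only [mobiusNum, mobiusDen] <;> ring

theorem mobiusDen_mul_conj_self {n r : Fin 3 → ℝ} (hn : IsUnitVec n) (hr : IsUnitVec r)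
    (ε : ℝ) :
    mobiusDen ε n (stereoNum r) (stereoDen r) *
        conj (mobiusDen ε n (stereoNum r) (stereoDen r)) =
      stereoDen r * (wmapDen ε n r - wmapNum ε n r 2) := by
  -- both certificates substitute `|p|² = q (2 - q)` and `|n₀ - i n₁|² = 1 - n₂²`
  simp only [mobiusDen, stereoNum, stereoDen, wmapDen, wmapNum, dot3, map_add, map_mul, map_sub,
    map_one, conj_ofReal, conj_I]
  push_cast
  linear_combination (norm := ring_nf)
    (ε : ℂ) ^ 2 * ((r 0 : ℂ) ^ 2 + (r 1 : ℂ) ^ 2) * hn.ofReal_sq_add_sq_add_sq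
    + (ε : ℂ) ^ 2 * (1 - (n 2 : ℂ) ^ 2) * hr.ofReal_sq_add_sq_add_sq
  simp only [I_sq, I_pow_four]
  ring

theorem mobiusNum_mul_conj_mobiusDen {n r : Fin 3 → ℝ} (hn : IsUnitVec n) (hr : IsUnitVec r)
    (ε : ℝ) :
    mobiusNum ε n (stereoNum r) (stereoDen r) *
        conj (mobiusDen ε n (stereoNum r) (stereoDen r)) =
      stereoDen r * stereoNum (wmapNum ε n r) := by
  simp only [mobiusNum, mobiusDen, stereoNum, stereoDen, wmapNum, dot3, map_add, map_mul,
    map_sub, map_one, conj_ofReal, conj_I]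
  push_cast
  linear_combination (norm := ring_nf)
    (ε : ℂ) * (1 + ε * n 2) * ((n 0 : ℂ) - I * n 1) * hr.ofReal_sq_add_sq_add_sq
    - (ε : ℂ) ^ 2 * (1 - (r 2 : ℂ)) * ((r 0 : ℂ) - I * r 1) * hn.ofReal_sq_add_sq_add_sq
  simp only [I_sq, I_pow_three]
  ring

theorem div_eq_div_of_mul_conj {φ₀ φ₁ q X Y : ℂ} (hq : q ≠ 0) (h₀ : φ₀ * conj φ₁ = q * X)
    (h₁ : φ₁ * conj φ₁ = q * Y) : X / Y = φ₀ / φ₁ := by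
  rcases eq_or_ne φ₁ 0 with hφ | hφ
  · simp only [hφ, map_zero, mul_zero, zero_eq_mul, hq, false_or] at h₁
    simp [h₁, hφ]
  · have hc : conj φ₁ ≠ 0 := (map_ne_zero _).mpr hφ
    rw [← mul_div_mul_left X Y hq, ← h₀, ← h₁, mul_div_mul_right _ _ hc]

theorem stmt14_general (n : Fin 3 → ℝ) (hn : IsUnitVec n) (ε : ℝ) (hε : ε ∈ Set.Ioo (0:ℝ) 1)
    (r : Fin 3 → ℝ) (hr : IsUnitVec r) (hr3 : r 2 ≠ 1) :
    stereo (wmap ε n r) =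
      ((1 + (ε:ℂ) * (n 2)) * stereo r + (ε:ℂ) * ((n 0 : ℂ) - Complex.I * (n 1))) /
      ((ε:ℂ) * ((n 0 : ℂ) + Complex.I * (n 1)) * stereo r + (1 - (ε:ℂ) * (n 2))) := by
  have hq : stereoDen r ≠ 0 := sub_ne_zero.mpr (by exact_mod_cast hr3.symm)
  have hD : wmapDen ε n r ≠ 0 :=
    (wmapDen_pos hn hr (abs_lt.mpr ⟨by linarith [hε.1], hε.2⟩)).ne'
  rw [wmap_eq_div, stereo_div _ hD, stereo_eq_div, mobius_div_eq _ _ hq]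
  exact div_eq_div_of_mul_conj hq (mobiusNum_mul_conj_mobiusDen hn hr ε)
    (mobiusDen_mul_conj_self hn hr ε)

/-- under stereographic projection w becomes the Möbius map
z ↦ (az+b)/(cz+d) with a = 1+εn₃, b = ε(n₁-in₂), c = ε(n₁+in₂), d = 1-εn₃. -/
theorem stmt14 (n : Fin 3 → ℝ) (hn : IsUnitVec n) (ε : ℝ) (hε : ε ∈ Set.Ioo (0:ℝ) 1)
    (r : Fin 3 → ℝ) (hr : IsUnitVec r) (hr3 : r 2 ≠ 1) (hw3 : wmap ε n r 2 ≠ 1) :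
    stereo (wmap ε n r) =
      ((1 + (ε:ℂ) * (n 2)) * stereo r + (ε:ℂ) * ((n 0 : ℂ) - Complex.I * (n 1))) /
      ((ε:ℂ) * ((n 0 : ℂ) + Complex.I * (n 1)) * stereo r + (1 - (ε:ℂ) * (n 2))) :=
  stmt14_general n hn ε hε r hr hr3
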